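/- Let α be a hinge angle with generating pair (z_s, z_d) where z_d = z_s e^{iα} has half-integer real part k+1/2 and positive imaginary part λ with λ ∉ ℤ + 1/2. Then the left limit lim_{ε→0⁺} ⌊z_s e^{i(α−ε)}⌉ = (k+1) + ⌊λ⌉ i and the right limit lim_{ε→0⁺} ⌊z_s e^{i(α+ε)}⌉ = k + ⌊λ⌉ i; in particular the discretized image of z_s jumps by −1 as the angle crosses α from below. -/
import Mathlib

open Real Complex

/-- rounding to nearest integer -/
noncomputable def rnd (x : ℝ) : ℤ := ⌊x + 1 / 2⌋

/-- componentwise rounding of a complex number -/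
noncomputable def crnd (z : ℂ) : ℂ := ((rnd z.re : ℤ) : ℂ) + ((rnd z.im : ℤ) : ℂ) * Complex.I

open Filter Topology in
lemma ev_pos_aux (c lam : ℝ) (hlam : 0 < lam) :
    ∀ᶠ ε in 𝓝[>] (0:ℝ), 0 < c*(Real.cos ε - 1) + lam*Real.sin ε := by
  have h1 : ∀ᶠ ε in 𝓝[>] (0:ℝ), 0 < ε := self_mem_nhdsWithin
  have h2 : ∀ᶠ ε in 𝓝[>] (0:ℝ), ε < π :=
    ((tendsto_id.mono_left nhdsWithin_le_nhds)).eventually_lt_const pi_pos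
  have hcont : ContinuousAt (fun ε : ℝ => lam * Real.cos (ε/2) - c * Real.sin (ε/2)) 0 := by
    fun_prop
  have h3 : ∀ᶠ ε in 𝓝[>] (0:ℝ), 0 < lam * Real.cos (ε/2) - c * Real.sin (ε/2) :=
    (hcont.tendsto.mono_left (nhdsWithin_le_nhds (s := Set.Ioi 0))).eventually_const_lt
      (by simp [hlam])
  filter_upwards [h1, h2, h3] with ε he hπ hf
  have hs : 0 < Real.sin (ε/2) := Real.sin_pos_of_pos_of_lt_pi (by linarith) (by linarith [pi_pos])
  have hcos := Real.cos_two_mul' (ε/2)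
  have hsin := Real.sin_two_mul (ε/2)
  rw [show 2*(ε/2)=ε by ring] at hcos hsin
  have key : c*(Real.cos ε - 1) + lam*Real.sin ε
      = 2 * Real.sin (ε/2) * (lam * Real.cos (ε/2) - c * Real.sin (ε/2)) := by
    rw [hcos, hsin]; linear_combination c * Real.sin_sq_add_cos_sq (ε/2)
  rw [key]
  exact mul_pos (by linarith) hf

lemma rnd_eq (m : ℤ) (x : ℝ) (h1 : (m:ℝ) - 1/2 ≤ x) (h2 : x < m + 1/2) : rnd x = m := by
  unfold rnd
  rw [Int.floor_eq_iff]
  constructor <;> push_cast <;> linarith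

lemma aux_mul (c lam θ : ℝ) :
    ((c:ℂ) + (lam:ℂ)*Complex.I) * Complex.exp ((θ:ℂ)*Complex.I)
    = ((c*Real.cos θ - lam*Real.sin θ : ℝ):ℂ) + ((lam*Real.cos θ + c*Real.sin θ : ℝ):ℂ)*Complex.I := by
  rw [Complex.exp_mul_I, ← Complex.ofReal_cos, ← Complex.ofReal_sin]
  apply Complex.ext <;> simp <;> ring

lemma crnd_add_mul_I (a b : ℝ) : crnd ((a:ℂ) + (b:ℂ)*Complex.I) = ((rnd a : ℤ):ℂ) + ((rnd b : ℤ):ℂ)*Complex.I := by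
  simp [crnd]

open Filter Topology in
/-- one-sided limits of the discretized image of the source point
of a hinge angle: the image jumps by −1 as the angle crosses α from below. -/
theorem discretized_jump (α : ℝ) (zs : ℂ) (k : ℤ) (lam : ℝ)
    (hlam : 0 < lam) (hlam' : ¬ ∃ n : ℤ, lam = (n : ℝ) + 1 / 2)
    (h : zs * Complex.exp (α * Complex.I) = (((k : ℝ) + 1 / 2 : ℝ) : ℂ) + (lam : ℂ) * Complex.I) :
    ∃ ε₀ > 0, ∀ ε : ℝ, 0 < ε → ε < ε₀ →
      crnd (zs * Complex.exp ((α - ε) * Complex.I)) =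
        (((k : ℤ) + 1 : ℤ) : ℂ) + ((rnd lam : ℤ) : ℂ) * Complex.I ∧
      crnd (zs * Complex.exp ((α + ε) * Complex.I)) =
        ((k : ℤ) : ℂ) + ((rnd lam : ℤ) : ℂ) * Complex.I := by
  obtain ⟨c, hc⟩ : ∃ c : ℝ, c = (k:ℝ) + 1/2 := ⟨_, rfl⟩
  rw [← hc] at h
  set m : ℤ := rnd lam with hmdef
  have hm2 : lam < (m:ℝ) + 1/2 := by
    unfold m; unfold rnd; linarith [Int.lt_floor_add_one (lam + 1/2)]
  have hm1 : (m:ℝ) - 1/2 < lam := by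
    have hle : (m:ℝ) ≤ lam + 1/2 := by
      unfold m; exact Int.floor_le (lam + 1/2)
    have hne : (m:ℝ) ≠ lam + 1/2 := by
      intro he
      exact hlam' ⟨m - 1, by push_cast; linarith⟩
    have := lt_of_le_of_ne hle hne
    linarith
  have tendsto_of : ∀ (s1 s2 : ℝ), Filter.Tendsto (fun ε : ℝ => s1 * Real.cos ε + s2 * Real.sin ε)
      (𝓝[>] (0:ℝ)) (𝓝 s1) := by
    intro s1 s2
    have : ContinuousAt (fun ε : ℝ => s1 * Real.cos ε + s2 * Real.sin ε) 0 := by fun_prop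
    have := this.tendsto.mono_left (nhdsWithin_le_nhds (s := Set.Ioi 0))
    simpa using this
  have E1 := ev_pos_aux c lam hlam
  have E2 := ev_pos_aux (-c) lam hlam
  have E3 : ∀ᶠ ε in 𝓝[>] (0:ℝ), c * Real.cos ε + lam * Real.sin ε < (k:ℝ) + 1 + 1/2 :=
    (tendsto_of c lam).eventually_lt_const (by rw [hc]; linarith)
  have E4 : ∀ᶠ ε in 𝓝[>] (0:ℝ), (k:ℝ) - 1/2 < c * Real.cos ε + (-lam) * Real.sin ε :=
    (tendsto_of c (-lam)).eventually_const_lt (by rw [hc]; linarith)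
  have E5 : ∀ᶠ ε in 𝓝[>] (0:ℝ), (m:ℝ) - 1/2 < lam * Real.cos ε + (-c) * Real.sin ε :=
    (tendsto_of lam (-c)).eventually_const_lt hm1
  have E6 : ∀ᶠ ε in 𝓝[>] (0:ℝ), lam * Real.cos ε + (-c) * Real.sin ε < (m:ℝ) + 1/2 :=
    (tendsto_of lam (-c)).eventually_lt_const hm2
  have E7 : ∀ᶠ ε in 𝓝[>] (0:ℝ), (m:ℝ) - 1/2 < lam * Real.cos ε + c * Real.sin ε :=
    (tendsto_of lam c).eventually_const_lt hm1
  have E8 : ∀ᶠ ε in 𝓝[>] (0:ℝ), lam * Real.cos ε + c * Real.sin ε < (m:ℝ) + 1/2 :=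
    (tendsto_of lam c).eventually_lt_const hm2
  have hall := (((((((E1.and E2).and E3).and E4).and E5).and E6).and E7).and E8)
  obtain ⟨u, hu, hsub⟩ := mem_nhdsGT_iff_exists_Ioo_subset.mp hall
  refine ⟨u, hu, fun ε hε hεu => ?_⟩
  obtain ⟨⟨⟨⟨⟨⟨⟨e1, e2⟩, e3⟩, e4⟩, e5⟩, e6⟩, e7⟩, e8⟩ := hsub ⟨hε, hεu⟩
  have hw : ∀ t : ℝ, zs * Complex.exp (((α:ℂ) + (t:ℂ)) * Complex.I)
      = ((c*Real.cos t - lam*Real.sin t : ℝ):ℂ) + ((lam*Real.cos t + c*Real.sin t : ℝ):ℂ)*Complex.I := by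
    intro t
    rw [add_mul, Complex.exp_add, ← mul_assoc, h, aux_mul c lam t]
  constructor
  · have h1 : c*Real.cos (-ε) - lam*Real.sin (-ε) = c*Real.cos ε + lam*Real.sin ε := by
      rw [Real.cos_neg, Real.sin_neg]; ring
    have h2 : lam*Real.cos (-ε) + c*Real.sin (-ε) = lam*Real.cos ε + (-c)*Real.sin ε := by
      rw [Real.cos_neg, Real.sin_neg]; ring
    have ht := hw (-ε)
    rw [h1, h2] at ht
    have hL : zs * Complex.exp ((↑α - ↑ε) * Complex.I)
        = ((c*Real.cos ε + lam*Real.sin ε : ℝ):ℂ) + ((lam*Real.cos ε + (-c)*Real.sin ε : ℝ):ℂ)*Complex.I := by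
      rw [← ht]
      push_cast
      ring_nf
    rw [hL, crnd_add_mul_I]
    have r1 : rnd (c*Real.cos ε + lam*Real.sin ε) = k + 1 := by
      apply rnd_eq
      · push_cast; linarith [e1, hc.le, hc.ge]
      · push_cast; linarith [e3]
    have r2 : rnd (lam*Real.cos ε + (-c)*Real.sin ε) = m := by
      apply rnd_eq
      · linarith [e5]
      · linarith [e6]
    rw [r1, r2]
  · have ht := hw ε
    have hR : zs * Complex.exp ((↑α + ↑ε) * Complex.I)
        = ((c*Real.cos ε - lam*Real.sin ε : ℝ):ℂ) + ((lam*Real.cos ε + c*Real.sin ε : ℝ):ℂ)*Complex.I := ht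
    rw [hR, crnd_add_mul_I]
    have r1 : rnd (c*Real.cos ε - lam*Real.sin ε) = k := by
      apply rnd_eq
      · push_cast; linarith [e4]
      · push_cast; linarith [e2, hc.le, hc.ge]
    have r2 : rnd (lam*Real.cos ε + c*Real.sin ε) = m := by
      apply rnd_eq
      · linarith [e7]
      · linarith [e8]
    rw [r1, r2]
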